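/- Let U be a unary update procedure and define s₀ = λx.0 and s_{i+1} = s_i ⊕ U(s_i). Then the sequence (s_i) is a weakly increasing chain: i ≤ j implies s_i ≤ s_j, where f ≤ g means that f n ≠ 0 implies f n = g n for every n (Learning Processes from Unary Update Procedures). -/

import Mathlib

/-- The pointwise information order on functions. -/
def FnLe (f g : ℕ → ℕ) : Prop := ∀ n, f n ≠ 0 → f n = g n

/-- Controlled update of a single function: `(f ⊕ (n,m)) x = m` if `x = n`,
`f x` otherwise; `f ⊕ ∅ = f`. -/
def oplus1 (f : ℕ → ℕ) : Option (ℕ × ℕ) → ℕ → ℕ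
  | none => f
  | some (n, m) => fun x => if x = n then m else f x

/-- The learning process generated by a unary update procedure `U`:
`s 0 = λx.0`, `s (i+1) = s i ⊕ U (s i)`. -/
def learnProc1 (U : (ℕ → ℕ) → Option (ℕ × ℕ)) : ℕ → ℕ → ℕ
  | 0 => fun _ => 0
  | i + 1 => oplus1 (learnProc1 U i) (U (learnProc1 U i))

/-!
Every nonzero value `s i n` was written by some update `U f = (n, s i n)`. If `U (s i)` wanted
to overwrite position `n` again, the update condition applied to `f` and `g = s i` (which has
`g n = s i n`) would forbid it. Hence every update lands on a position where `s i` is still `0`,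
so each step extends the previous function, and the chain property follows by transitivity.
-/

theorem FnLe.refl (f : ℕ → ℕ) : FnLe f f := fun _ _ => rfl

theorem FnLe.trans {f g h : ℕ → ℕ} (hfg : FnLe f g) (hgh : FnLe g h) : FnLe f h := fun n hn =>
  (hfg n hn).trans (hgh n (hfg n hn ▸ hn))

theorem fnLe_oplus1 {f : ℕ → ℕ} {p : Option (ℕ × ℕ)}
    (hp : ∀ n m, p = some (n, m) → f n = 0) : FnLe f (oplus1 f p) := by
  intro x hx
  rcases p with _ | ⟨n, m⟩
  · rfl
  · have hxn : x ≠ n := fun h => hx (h ▸ hp n m rfl)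
    simp only [oplus1, if_neg hxn]

theorem exists_update_of_learnProc1_ne_zero (U : (ℕ → ℕ) → Option (ℕ × ℕ)) {i n : ℕ}
    (h : learnProc1 U i n ≠ 0) : ∃ f, U f = some (n, learnProc1 U i n) := by
  induction i with
  | zero => exact absurd rfl h
  | succ i ih =>
    rcases hU : U (learnProc1 U i) with _ | ⟨a, b⟩
    · simp only [learnProc1, hU, oplus1] at h ⊢
      exact ih h
    · simp only [learnProc1, hU, oplus1] at h ⊢
      by_cases hna : n = a
      · subst hna
        simpa using ⟨learnProc1 U i, hU⟩
      · simp only [if_neg hna] at h ⊢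
        exact ih h

section UpdateCondition

variable {U : (ℕ → ℕ) → Option (ℕ × ℕ)}
  (hupd : ∀ (f g : ℕ → ℕ) (n m h l : ℕ),
    U f = some (n, m) → g n = m → U g = some (h, l) → h ≠ n)
include hupd

theorem learnProc1_eq_zero_of_update {i n m : ℕ} (hU : U (learnProc1 U i) = some (n, m)) :
    learnProc1 U i n = 0 := by
  by_contra hn
  obtain ⟨f, hf⟩ := exists_update_of_learnProc1_ne_zero U hn
  exact hupd f (learnProc1 U i) n _ n m hf rfl hU rfl

theorem learnProc1_fnLe_succ (i : ℕ) : FnLe (learnProc1 U i) (learnProc1 U (i + 1)) :=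
  fnLe_oplus1 fun _ _ hU => learnProc1_eq_zero_of_update hupd hU

end UpdateCondition

theorem learning_process_weakly_increasing_general (U : (ℕ → ℕ) → Option (ℕ × ℕ))
    -- update condition
    (hupd : ∀ (f g : ℕ → ℕ) (n m h l : ℕ),
      U f = some (n, m) → g n = m → U g = some (h, l) → h ≠ n) :
    ∀ i j : ℕ, i ≤ j → FnLe (learnProc1 U i) (learnProc1 U j) := by
  intro i j hij
  induction hij with
  | refl => exact FnLe.refl _
  | step _ ih => exact ih.trans (learnProc1_fnLe_succ hupd _)

/-- Learning Processes from Unary Update Procedures: the learning process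
generated by a unary update procedure is a weakly increasing chain. -/
theorem learning_process_weakly_increasing (U : (ℕ → ℕ) → Option (ℕ × ℕ))
    -- continuity
    (hcont : ∀ f : ℕ → ℕ, ∃ A : Finset ℕ,
      ∀ g : ℕ → ℕ, (∀ n ∈ A, g n = f n) → U g = U f)
    -- update condition
    (hupd : ∀ (f g : ℕ → ℕ) (n m h l : ℕ),
      U f = some (n, m) → g n = m → U g = some (h, l) → h ≠ n) :
    ∀ i j : ℕ, i ≤ j → FnLe (learnProc1 U i) (learnProc1 U j) :=
  learning_process_weakly_increasing_general U hupd
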